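/- The number of multiset derangements of 1^2 2^2 ... n^2 (two copies of each of n symbols) satisfies the closed form given by the Even–Gillis integral: M(2,...,2) = ∫_0^∞ e^{-x} L_2(x)^n dx, where L_2(x) = 1 - 2x + x²/2. In particular M(2,2,2) = 10. -/

import Mathlib

/-- The number of multiset derangements of the word `w₀ : Fin m → Fin n`:
rearrangements of `w₀` (same number of occurrences of every symbol) that
differ from `w₀` in every position. -/
def multisetDerangementCount {m n : ℕ} (w₀ : Fin m → Fin n) : ℕ :=
  Fintype.card {f : Fin m → Fin n //
    (∀ j, (Finset.univ.filter fun i => f i = j).card =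
          (Finset.univ.filter fun i => w₀ i = j).card) ∧
    ∀ i, f i ≠ w₀ i}

/-- The simple Laguerre polynomial `L_a(x) = ∑_{α=0}^{a} (-1)^α C(a,α) x^α / α!`. -/
noncomputable def laguerre (a : ℕ) (x : ℝ) : ℝ :=
  ∑ α ∈ Finset.range (a + 1), (-1 : ℝ) ^ α * (Nat.choose a α : ℝ) * x ^ α / (Nat.factorial α : ℝ)

/-- The sorted word `1 1 2 2 ⋯ n n` with two copies of each of `n` symbols. -/
def sortedWordTwo (n : ℕ) : Fin (2 * n) → Fin n :=
  fun i => ⟨(i : ℕ) / 2, by have := i.isLt; omega⟩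

/-!
Inclusion–exclusion over the set `S` of positions where a rearrangement of `w` is required to
agree with `w` writes the number of multiset derangements as `∑_S (-1)^|S| A(S)`, where `A(S)`
counts the rearrangements of `w` restricted to `Sᶜ`: the multinomial coefficient
`|Sᶜ|! / ∏_j c_j!`, with `c_j` the number of occurrences of `j` in `Sᶜ` (orbit–stabilizer for
permutations of the positions). Writing `|Sᶜ|! = ∫₀^∞ e^{-x} x^{|Sᶜ|} dx` turns the alternating
sum into `∫₀^∞ e^{-x}` of a sum over `S` that factors over the symbols, since `S` is the disjoint
union of its traces on the fibres of `w`; the factor of a symbol occurring `k` times is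
`∑_{T ⊆ fibre} (-1)^|T| x^{k-|T|} / (k-|T|)! = (-1)^k L_k(x)`.
-/

open Finset Real MeasureTheory

theorem integral_exp_neg_mul_pow (m : ℕ) :
    ∫ x in Set.Ioi (0 : ℝ), exp (-x) * x ^ m = m.factorial := by
  rw [← Real.Gamma_nat_eq_factorial, Real.Gamma_eq_integral (by positivity)]
  simp only [add_sub_cancel_right, rpow_natCast]

theorem integrableOn_exp_neg_mul_pow (m : ℕ) :
    IntegrableOn (fun x : ℝ => exp (-x) * x ^ m) (Set.Ioi 0) := by
  simpa only [add_sub_cancel_right, rpow_natCast] using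
    Real.GammaIntegral_convergent (s := m + 1) (by positivity)

theorem sum_range_choose_mul_pow_div_factorial_eq_laguerre (a : ℕ) (x : ℝ) :
    ∑ t ∈ range (a + 1), (a.choose t : ℝ) * ((-1) ^ t * x ^ (a - t) / (a - t).factorial) =
      (-1) ^ a * laguerre a x := by
  rw [laguerre, mul_sum, ← sum_range_reflect]
  refine sum_congr rfl fun t ht => ?_
  obtain ⟨s, rfl⟩ := Nat.exists_eq_add_of_le (Nat.lt_succ_iff.1 (mem_range.1 ht))
  have hsq : ((-1 : ℝ) ^ t) ^ 2 = 1 := by rw [← pow_mul, pow_mul', neg_one_sq, one_pow]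
  simp only [add_tsub_cancel_right, add_tsub_cancel_left, pow_add]
  rw [Nat.choose_symm_add]
  linear_combination (-((t + s).choose s * (-1) ^ s * x ^ t / t.factorial : ℝ)) * hsq

theorem card_filter_univ_coe {α : Type*} (s : Finset α) (q : α → Prop) [DecidablePred q]
    [DecidablePred fun i : s => q i] : #{i : s | q i} = #{i ∈ s | q i} := by
  rw [univ_eq_attach, card_filter, card_filter, ← sum_attach s fun i => if q i then 1 else 0]
  exact sum_congr rfl fun i _ => by congr

namespace MultisetDerangement

variable {α β : Type*} [Fintype α] [DecidableEq α] [Fintype β] [DecidableEq β]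

def rearrangements (w : α → β) : Finset (α → β) :=
  {f | ∀ j, #{i | f i = j} = #{i | w i = j}}

def multisetDerangements (w : α → β) : Finset (α → β) :=
  {f ∈ rearrangements w | ∀ i, f i ≠ w i}

theorem mem_rearrangements_iff_exists_perm {w f : α → β} :
    f ∈ rearrangements w ↔ ∃ σ : Equiv.Perm α, f = w ∘ σ := by
  simp only [rearrangements, mem_filter, mem_univ, true_and]
  constructor
  · intro hf
    have e : ∀ j, {i // f i = j} ≃ {i // w i = j} := fun j =>
      Fintype.equivOfCardEq (by simp only [Fintype.card_subtype, hf j])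
    exact ⟨Equiv.ofFiberEquiv e, funext fun i => (Equiv.ofFiberEquiv_map e i).symm⟩
  · rintro ⟨σ, rfl⟩ j
    simp only [← Fintype.card_subtype]
    exact Fintype.card_congr (σ.subtypeEquiv fun _ => Iff.rfl)

theorem card_rearrangements_mul_prod_factorial (w : α → β) :
    #(rearrangements w) * ∏ j, (#{i | w i = j}).factorial = (Fintype.card α).factorial := by
  have horbit : (MulAction.orbit (Equiv.Perm α)ᵈᵐᵃ w).ncard = #(rearrangements w) := by
    rw [← Set.ncard_coe_finset]
    congr 1
    ext f
    rw [mem_coe, mem_rearrangements_iff_exists_perm, MulAction.mem_orbit_iff]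
    exact ⟨fun ⟨g, hg⟩ => ⟨DomMulAct.mk.symm g, hg.symm⟩,
      fun ⟨σ, hσ⟩ => ⟨DomMulAct.mk σ, hσ.symm⟩⟩
  have hstab : Nat.card (MulAction.stabilizer (Equiv.Perm α)ᵈᵐᵃ w)
      = ∏ j, (#{i | w i = j}).factorial := by
    rw [Nat.card_congr (Equiv.subtypeEquiv (p := (· ∈ MulAction.stabilizer _ w))
      (q := fun σ : Equiv.Perm α => w ∘ σ = w) DomMulAct.mk.symm
      fun _ => DomMulAct.mem_stabilizer_iff), Nat.card_eq_fintype_card,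
      DomMulAct.stabilizer_card]
    simp only [Fintype.card_subtype]
  rw [← horbit, ← hstab, ← MulAction.index_stabilizer, mul_comm, Subgroup.card_mul_index,
    Nat.card_congr DomMulAct.mk.symm, Nat.card_perm, Nat.card_eq_fintype_card]

omit [Fintype β] in
theorem card_fiber_eq_add (f : α → β) (S : Finset α) (j : β) :
    #{i | f i = j} = #{i ∈ S | f i = j} + #{i : ↥Sᶜ | f i = j} := by
  rw [card_filter_univ_coe Sᶜ fun i => f i = j, card_filter, card_filter, card_filter,
    sum_add_sum_compl]

theorem restrict_mem_rearrangements_iff {w f : α → β} {S : Finset α} (h : ∀ i ∈ S, f i = w i) :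
    (fun i : ↥Sᶜ => f i) ∈ rearrangements (fun i : ↥Sᶜ => w i) ↔ f ∈ rearrangements w := by
  have hS : ∀ j, #{i ∈ S | f i = j} = #{i ∈ S | w i = j} := fun j =>
    congrArg card (filter_congr fun i hi => by rw [h i hi])
  simp only [rearrangements, mem_filter, mem_univ, true_and, card_fiber_eq_add f S,
    card_fiber_eq_add w S, hS, Nat.add_left_cancel_iff]

theorem card_rearrangements_eqOn (w : α → β) (S : Finset α) :
    #{f ∈ rearrangements w | ∀ i ∈ S, f i = w i} = #(rearrangements fun i : ↥Sᶜ => w i) := by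
  set extend : (↥Sᶜ → β) → α → β := fun g a => if h : a ∈ Sᶜ then g ⟨a, h⟩ else w a
  have restrict_extend (g : ↥Sᶜ → β) : (fun i : ↥Sᶜ => extend g i) = g :=
    funext fun i => dif_pos i.2
  refine card_nbij' (fun f i => f i) extend ?_ ?_ ?_ ?_
  · intro f hf
    rw [mem_coe, mem_filter] at hf
    exact (restrict_mem_rearrangements_iff hf.2).2 hf.1
  · intro g hg
    have hw : ∀ i ∈ S, extend g i = w i := fun i hi => dif_neg (by simpa using hi)
    refine mem_filter.2 ⟨(restrict_mem_rearrangements_iff hw).1 ?_, hw⟩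
    rwa [restrict_extend]
  · intro f hf
    rw [mem_coe, mem_filter] at hf
    funext a
    by_cases ha : a ∈ Sᶜ
    · exact dif_pos ha
    · exact (dif_neg ha).trans (hf.2 a (by simpa using ha)).symm
  · exact fun g _ => restrict_extend g

theorem card_rearrangements_eqOn_mul_prod_factorial (w : α → β) (S : Finset α) :
    #{f ∈ rearrangements w | ∀ i ∈ S, f i = w i} * ∏ j, (#{i ∈ Sᶜ | w i = j}).factorial =
      (#Sᶜ).factorial := by
  rw [card_rearrangements_eqOn, ← Fintype.card_coe (Sᶜ : Finset α),
    ← card_rearrangements_mul_prod_factorial fun i : ↥Sᶜ => w i]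
  refine congrArg _ (prod_congr rfl fun j _ => congrArg _ ?_)
  convert (card_filter_univ_coe Sᶜ fun i => w i = j).symm

theorem card_multisetDerangements_eq_sum (w : α → β) :
    (#(multisetDerangements w) : ℤ) =
      ∑ S : Finset α, (-1 : ℤ) ^ #S * #{f ∈ rearrangements w | ∀ i ∈ S, f i = w i} := by
  have h := inclusion_exclusion_card_inf_compl univ
    fun i => ({f | f.1 i = w i} : Finset ↥(rearrangements w))
  have hinf (S : Finset α) : (S.inf fun i => ({f | f.1 i = w i} : Finset ↥(rearrangements w)))
      = ({f | ∀ i ∈ S, f.1 i = w i} : Finset ↥(rearrangements w)) := by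
    ext; simp [mem_inf]
  have hinf_compl : (univ.inf fun i => ({f | f.1 i = w i} : Finset ↥(rearrangements w))ᶜ)
      = ({f | ∀ i, f.1 i ≠ w i} : Finset ↥(rearrangements w)) := by
    ext; simp [mem_inf]
  simp only [hinf_compl, hinf, powerset_univ] at h
  rw [multisetDerangements, ← card_filter_univ_coe, h]
  refine sum_congr rfl fun S _ => ?_
  congr 2
  convert card_filter_univ_coe _ fun f : α → β => ∀ i ∈ S, f i = w i

/-- Contribution of a set `T` of forced fixed positions inside the fibre `P` of one symbol. -/
noncomputable def laguerreTerm (P T : Finset α) (x : ℝ) : ℝ :=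
  (-1) ^ #T * x ^ #(P \ T) / (#(P \ T)).factorial

omit [Fintype α] in
theorem sum_powerset_laguerreTerm (P : Finset α) (x : ℝ) :
    ∑ T ∈ P.powerset, laguerreTerm P T x = (-1) ^ #P * laguerre #P x := by
  rw [← sum_range_choose_mul_pow_div_factorial_eq_laguerre]
  simp only [← nsmul_eq_mul]
  rw [← sum_powerset_apply_card fun t => (-1 : ℝ) ^ t * x ^ (#P - t) / (#P - t).factorial]
  refine sum_congr rfl fun T hT => ?_
  rw [laguerreTerm, card_sdiff_of_subset (mem_powerset.1 hT)]

theorem prod_laguerreTerm_fiber (w : α → β) (S : Finset α) (x : ℝ) :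
    ∏ j, laguerreTerm {i | w i = j} {i ∈ S | w i = j} x =
      (-1) ^ #S / (∏ j, ((#{i ∈ Sᶜ | w i = j}).factorial : ℝ)) * x ^ #Sᶜ := by
  have hdiff (j : β) : ({i | w i = j} : Finset α) \ {i ∈ S | w i = j} = {i ∈ Sᶜ | w i = j} := by
    ext i
    simp only [mem_sdiff, mem_filter, mem_univ, true_and, mem_compl]
    tauto
  have hcard (T : Finset α) : #T = ∑ j, #{i ∈ T | w i = j} :=
    card_eq_sum_card_fiberwise fun i _ => mem_univ (w i)
  simp only [laguerreTerm, hdiff, div_eq_mul_inv, prod_mul_distrib, prod_pow_eq_pow_sum,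
    prod_inv_distrib]
  rw [← hcard, ← hcard]
  ring

theorem sum_prod_filter_eq_prod_sum_powerset {R : Type*} [CommSemiring R] (w : α → β)
    (F : β → Finset α → R) :
    ∑ S : Finset α, ∏ j, F j {i ∈ S | w i = j} =
      ∏ j, ∑ T ∈ ({i | w i = j} : Finset α).powerset, F j T := by
  rw [prod_univ_sum]
  refine sum_nbij' (fun S j => {i ∈ S | w i = j}) (fun T => univ.biUnion T)
    (fun S _ => Fintype.mem_piFinset.2 fun j =>
      mem_powerset.2 (filter_subset_filter _ (subset_univ S)))
    (fun _ _ => mem_univ _) (fun S _ => ?_) (fun T hT => ?_) fun _ _ => rfl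
  · ext i
    simp
  · have hT (j : β) {i : α} (hi : i ∈ T j) : w i = j :=
      (mem_filter.1 (mem_powerset.1 (Fintype.mem_piFinset.1 hT j) hi)).2
    funext j
    ext i
    simp only [mem_filter, mem_biUnion, mem_univ, true_and]
    refine ⟨fun ⟨⟨j', hi⟩, hij⟩ => ?_, fun hi => ⟨⟨j, hi⟩, hT j hi⟩⟩
    rwa [← hij, hT j' hi]

theorem card_multisetDerangements_eq_integral (w : α → β) :
    (#(multisetDerangements w) : ℝ) = ∫ x in Set.Ioi (0 : ℝ),
      exp (-x) * ∏ j, ((-1) ^ #{i | w i = j} * laguerre #{i | w i = j} x) := by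
  set integrand : Finset α → ℝ → ℝ :=
    fun S x => exp (-x) * ∏ j, laguerreTerm {i | w i = j} {i ∈ S | w i = j} x
  have hintegrand (S : Finset α) : integrand S = fun x =>
      (-1) ^ #S / (∏ j, ((#{i ∈ Sᶜ | w i = j}).factorial : ℝ)) * (exp (-x) * x ^ #Sᶜ) := by
    funext x
    simp only [integrand, prod_laguerreTerm_fiber]
    ring
  have hintegral (S : Finset α) : ∫ x in Set.Ioi 0, integrand S x =
      (-1) ^ #S * #{f ∈ rearrangements w | ∀ i ∈ S, f i = w i} := by
    rw [hintegrand, integral_const_mul, integral_exp_neg_mul_pow,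
      ← card_rearrangements_eqOn_mul_prod_factorial w S]
    push_cast
    field_simp
  have hintegrable (S : Finset α) : IntegrableOn (integrand S) (Set.Ioi 0) := by
    rw [hintegrand]
    exact (integrableOn_exp_neg_mul_pow _).const_mul _
  calc (#(multisetDerangements w) : ℝ)
      = ∑ S : Finset α, (-1 : ℝ) ^ #S * #{f ∈ rearrangements w | ∀ i ∈ S, f i = w i} := by
        exact_mod_cast card_multisetDerangements_eq_sum w
    _ = ∑ S : Finset α, ∫ x in Set.Ioi 0, integrand S x := sum_congr rfl fun S _ => (hintegral S).symm
    _ = ∫ x in Set.Ioi 0, ∑ S : Finset α, integrand S x :=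
        (integral_finsetSum _ fun S _ => hintegrable S).symm
    _ = _ := by
        congr 1 with x
        rw [← mul_sum, sum_prod_filter_eq_prod_sum_powerset w
          fun j T => laguerreTerm {i | w i = j} T x]
        simp only [sum_powerset_laguerreTerm]

end MultisetDerangement

open MultisetDerangement

theorem multisetDerangementCount_eq_card {m n : ℕ} (w : Fin m → Fin n) :
    multisetDerangementCount w = #(multisetDerangements w) := by
  rw [multisetDerangementCount, Fintype.card_subtype, multisetDerangements, rearrangements,
    filter_filter]
  congr

theorem card_fiber_sortedWordTwo (n : ℕ) (j : Fin n) : #{i | sortedWordTwo n i = j} = 2 := by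
  have hj := j.isLt
  have hfiber : ({i | sortedWordTwo n i = j} : Finset (Fin (2 * n))) =
      {⟨2 * j, by omega⟩, ⟨2 * j + 1, by omega⟩} := by
    ext i
    simp only [mem_filter, mem_univ, true_and, mem_insert, mem_singleton, Fin.ext_iff,
      sortedWordTwo]
    omega
  rw [hfiber, card_pair (by simp [Fin.ext_iff])]

theorem even_gillis_two_of_each :
    (∀ n : ℕ, (multisetDerangementCount (sortedWordTwo n) : ℝ) =
        ∫ x in Set.Ioi (0 : ℝ), Real.exp (-x) * (laguerre 2 x) ^ n) ∧
    multisetDerangementCount (sortedWordTwo 3) = 10 := by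
  refine ⟨fun n => ?_, by decide⟩
  rw [multisetDerangementCount_eq_card, card_multisetDerangements_eq_integral]
  simp only [card_fiber_sortedWordTwo, neg_one_sq, one_mul, prod_const, card_univ,
    Fintype.card_fin]
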